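/- arXiv:2210.03648 — 2 statements merged into one kernel-verified Lean document; each statement's English description precedes it below -/
import Mathlib

section
/- Let G be a gyrogroup and H a strongly L-subgyrogroup of G. Then a⊕(b⊕H) = (a⊕b)⊕H for all a, b ∈ G, where x⊕S = {x⊕s : s ∈ S}. -/
universe u

/-- A gyrogroup: a groupoid with identity, inverses, gyroautomorphisms satisfying the
left gyroassociative law and the left loop property. -/
class Gyrogroup (G : Type u) where
  add : G → G → G
  zero : G
  neg : G → G
  gyr : G → G → G → G
  zero_add : ∀ x, add zero x = x
  add_zero : ∀ x, add x zero = x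
  neg_add : ∀ x, add (neg x) x = zero
  add_neg : ∀ x, add x (neg x) = zero
  gyr_bijective : ∀ a b, Function.Bijective (gyr a b)
  gyr_add : ∀ a b x y, gyr a b (add x y) = add (gyr a b x) (gyr a b y)
  gyrassoc : ∀ a b z, add a (add b z) = add (add a b) (gyr a b z)
  loop : ∀ a b, gyr (add a b) b = gyr a b

/-- A topological gyrogroup: the operation is jointly continuous and inversion is continuous. -/
class TopologicalGyrogroup (G : Type u) [TopologicalSpace G] [Gyrogroup G] : Prop where
  continuous_add : Continuous fun p : G × G => Gyrogroup.add p.1 p.2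
  continuous_neg : Continuous (Gyrogroup.neg : G → G)

/-- `H` is a subgyrogroup of `G` (by the subgyrogroup criterion: nonempty and closed
under the operation and inversion; this is equivalent to `(H, ⊕|H)` being itself a
gyrogroup whose gyroautomorphisms are the restrictions of those of `G`). -/
structure IsSubgyrogroup {G : Type u} [Gyrogroup G] (H : Set G) : Prop where
  nonempty : H.Nonempty
  add_mem : ∀ ⦃a⦄, a ∈ H → ∀ ⦃b⦄, b ∈ H → Gyrogroup.add a b ∈ H
  neg_mem : ∀ ⦃a⦄, a ∈ H → Gyrogroup.neg a ∈ H

/-- An `L`-subgyrogroup: a subgyrogroup with `gyr[a,h](H) = H` for all `a ∈ G`, `h ∈ H`. -/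
structure IsLSubgyrogroup {G : Type u} [Gyrogroup G] (H : Set G)
    extends IsSubgyrogroup H : Prop where
  gyr_image : ∀ (a : G), ∀ ⦃h⦄, h ∈ H → Gyrogroup.gyr a h '' H = H

/-- A strongly `L`-subgyrogroup: a subgyrogroup with `gyr[a,b](H) ⊆ H` for all `a, b ∈ G`. -/
structure IsStronglyLSubgyrogroup {G : Type u} [Gyrogroup G] (H : Set G)
    extends IsSubgyrogroup H : Prop where
  gyr_image_subset : ∀ a b : G, Gyrogroup.gyr a b '' H ⊆ H

/-- The pointwise sum `A ⊕ B = {a ⊕ b : a ∈ A, b ∈ B}` of two subsets. -/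
def setAdd {G : Type u} [Gyrogroup G] (A B : Set G) : Set G :=
  Set.image2 Gyrogroup.add A B

/-- The left coset `a ⊕ H = {a ⊕ h : h ∈ H}`. -/
def lCoset {G : Type u} [Gyrogroup G] (H : Set G) (a : G) : Set G :=
  (fun h => Gyrogroup.add a h) '' H

/-- The setoid on `G` identifying points with the same left coset modulo `H`. -/
def cosetSetoid {G : Type u} [Gyrogroup G] (H : Set G) : Setoid G :=
  ⟨fun x y => lCoset H x = lCoset H y,
   ⟨fun _ => rfl, fun h => h.symm, fun h₁ h₂ => h₁.trans h₂⟩⟩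

/-- The coset space `G/H`, carrying the quotient topology: a set `O ⊆ G/H` is open
iff `π⁻¹(O)` is open in `G`. -/
abbrev GyroQuot {G : Type u} [Gyrogroup G] (H : Set G) : Type u :=
  Quotient (cosetSetoid H)

/-- The natural quotient map `π : G → G/H`, `a ↦ a ⊕ H`. -/
def qmap {G : Type u} [Gyrogroup G] (H : Set G) (a : G) : GyroQuot H :=
  Quotient.mk (cosetSetoid H) a

namespace GyroAux

open Gyrogroup

variable {G : Type u} [Gyrogroup G]

theorem add_left_cancel (x : G) {u v : G} (h : add x u = add x v) : u = v := by
  have h1 : add (neg x) (add x u) = add (add (neg x) x) (gyr (neg x) x u) :=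
    gyrassoc _ _ _
  have h2 : add (neg x) (add x v) = add (add (neg x) x) (gyr (neg x) x v) :=
    gyrassoc _ _ _
  rw [Gyrogroup.neg_add, Gyrogroup.zero_add] at h1 h2
  have : gyr (neg x) x u = gyr (neg x) x v := by rw [← h1, ← h2, h]
  exact (gyr_bijective (neg x) x).1 this

theorem gyr_zero (x z : G) : gyr zero x z = z := by
  have h : add zero (add x z) = add (add zero x) (gyr zero x z) := gyrassoc _ _ _
  rw [Gyrogroup.zero_add, Gyrogroup.zero_add] at h
  exact (add_left_cancel x h).symm

theorem gyr_neg_self (x z : G) : gyr (neg x) x z = z := by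
  have h := loop (neg x) x
  rw [Gyrogroup.neg_add] at h
  have := congrFun h z
  rw [← this]
  exact gyr_zero x z

theorem neg_add_cancel_left (x z : G) : add (neg x) (add x z) = z := by
  have h : add (neg x) (add x z) = add (add (neg x) x) (gyr (neg x) x z) :=
    gyrassoc _ _ _
  rw [Gyrogroup.neg_add, Gyrogroup.zero_add, gyr_neg_self] at h
  exact h

/-- `gyr (neg a) (add a b)` is a left inverse of `gyr a b`. -/
theorem gyr_inv (a b z : G) : gyr (neg a) (add a b) (gyr a b z) = z := by
  have h1 : add (neg a) (add a (add b z)) = add b z := neg_add_cancel_left _ _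
  have h2 : add a (add b z) = add (add a b) (gyr a b z) := gyrassoc _ _ _
  have h3 : add (neg a) (add (add a b) (gyr a b z))
      = add (add (neg a) (add a b)) (gyr (neg a) (add a b) (gyr a b z)) :=
    gyrassoc _ _ _
  rw [neg_add_cancel_left] at h3
  rw [h2, h3] at h1
  exact add_left_cancel b h1

/-- `gyr (neg a) (add a b)` is also a right inverse of `gyr a b`. -/
theorem gyr_inv' (a b z : G) : gyr a b (gyr (neg a) (add a b) z) = z := by
  obtain ⟨w, hw⟩ := (gyr_bijective a b).2 z
  rw [← hw, gyr_inv]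

end GyroAux

/-- If `H` is a strongly L-subgyrogroup of a gyrogroup `G`, then
`a ⊕ (b ⊕ H) = (a ⊕ b) ⊕ H` for all `a, b ∈ G`. -/
theorem stmt_7 {G : Type u} [Gyrogroup G] (H : Set G) (hH : IsStronglyLSubgyrogroup H)
    (a b : G) :
    (fun x => Gyrogroup.add a x) '' lCoset H b = lCoset H (Gyrogroup.add a b) := by
  ext x
  simp only [lCoset, Set.mem_image, ← Set.image_comp, Function.comp]
  constructor
  · rintro ⟨h, hh, rfl⟩
    refine ⟨Gyrogroup.gyr a b h, hH.gyr_image_subset a b ⟨h, hh, rfl⟩, ?_⟩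
    exact (Gyrogroup.gyrassoc a b h).symm
  · rintro ⟨h, hh, rfl⟩
    refine ⟨Gyrogroup.gyr (Gyrogroup.neg a) (Gyrogroup.add a b) h,
      hH.gyr_image_subset _ _ ⟨h, hh, rfl⟩, ?_⟩
    rw [Gyrogroup.gyrassoc, GyroAux.gyr_inv']
end

section
/- Let G be a topological gyrogroup and H a closed strongly L-subgyrogroup of G. If the subspace H and the quotient space G/H are both first-countable, then the space G is first-countable. -/
universe u

/-!
Because `H` is invariant under all gyrations, `x ⊕ h` and `x` lie in the same left coset for
`h ∈ H`, so the saturation of an open set `Q` is `⋃ h ∈ H, (· ⊕ h)⁻¹' Q` and `π : G → G/H` is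
open. Hence, for neighbourhoods `V` and `W` of `0`, every `x ∈ W` with `π x ∈ π (V ∩ W)` is
`q ⊕ h` with `q ∈ V` and `h = ⊖q ⊕ x ∈ H ∩ (⊖W ⊕ W)`. First countability of `H` provides
countably many neighbourhoods `W` of `0` such that every neighbourhood of `0` in `H` contains
some `H ∩ (⊖W ⊕ W)`; intersected with the preimages of a countable base of `G/H` at `π 0`, they
form a countable base of `G` at `0`, which left translations carry to every point.
-/

open Filter Set Topology

namespace Gyrogroup

variable {G : Type u} [Gyrogroup G]

theorem add_left_injective (a : G) : Function.Injective (add a) := by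
  have key : ∀ z : G, add (neg a) (add a z) = gyr (neg a) a z := fun z => by
    rw [gyrassoc, Gyrogroup.neg_add, Gyrogroup.zero_add]
  intro x y h
  apply (gyr_bijective (neg a) a).injective
  rw [← key, ← key, h]

theorem gyr_zero_left_apply (b z : G) : gyr zero b z = z := by
  have := gyrassoc zero b z
  rw [Gyrogroup.zero_add, Gyrogroup.zero_add] at this
  exact (Gyrogroup.add_left_injective b this).symm

theorem gyr_neg_self_apply (a z : G) : gyr (neg a) a z = z := by
  rw [← loop, Gyrogroup.neg_add, gyr_zero_left_apply]

theorem gyr_self_neg_apply (a z : G) : gyr a (neg a) z = z := by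
  rw [← loop, Gyrogroup.add_neg, gyr_zero_left_apply]

theorem neg_add_cancel_left (a x : G) : add (neg a) (add a x) = x := by
  rw [gyrassoc, Gyrogroup.neg_add, Gyrogroup.zero_add, gyr_neg_self_apply]

theorem add_neg_cancel_left (a x : G) : add a (add (neg a) x) = x := by
  rw [gyrassoc, Gyrogroup.add_neg, Gyrogroup.zero_add, gyr_self_neg_apply]

theorem gyr_add_gyr_apply (a b c z : G) :
    gyr (add a b) (gyr a b c) (gyr a b z) = gyr a (add b c) (gyr b c z) := by
  have expand₁ : add a (add b (add c z))
      = add (add a (add b c)) (gyr (add a b) (gyr a b c) (gyr a b z)) := by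
    rw [gyrassoc a b, gyr_add, gyrassoc (add a b), ← gyrassoc a b c]
  have expand₂ : add a (add b (add c z))
      = add (add a (add b c)) (gyr a (add b c) (gyr b c z)) := by
    rw [gyrassoc b c, gyrassoc a (add b c)]
  exact Gyrogroup.add_left_injective _ (expand₁.symm.trans expand₂)

theorem gyr_apply_gyr_neg_add (a d z : G) : gyr a d (gyr (neg a) (add a d) z) = z := by
  have := gyr_add_gyr_apply a (neg a) (add a d) z
  rwa [Gyrogroup.add_neg, gyr_self_neg_apply, gyr_self_neg_apply, gyr_zero_left_apply,
    Gyrogroup.neg_add_cancel_left, eq_comm] at this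

end Gyrogroup

open Gyrogroup

section

variable {G : Type u} [Gyrogroup G] {H : Set G}

theorem IsSubgyrogroup.zero_mem (hH : IsSubgyrogroup H) : (zero : G) ∈ H := by
  obtain ⟨a, ha⟩ := hH.nonempty
  simpa only [Gyrogroup.neg_add] using hH.add_mem (hH.neg_mem ha) ha

theorem IsStronglyLSubgyrogroup.gyr_mem (hH : IsStronglyLSubgyrogroup H) (a b : G) {h : G}
    (hh : h ∈ H) : gyr a b h ∈ H :=
  hH.gyr_image_subset a b ⟨h, hh, rfl⟩

theorem IsStronglyLSubgyrogroup.lCoset_add (hH : IsStronglyLSubgyrogroup H) (a : G) {h : G}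
    (hh : h ∈ H) : lCoset H (add a h) = lCoset H a := by
  apply Subset.antisymm
  · rintro _ ⟨k, hk, rfl⟩
    refine ⟨add h (gyr (neg a) (add a h) k), hH.add_mem hh (hH.gyr_mem _ _ hk), ?_⟩
    simp only [gyrassoc a h, gyr_apply_gyr_neg_add]
  · rintro _ ⟨k, hk, rfl⟩
    refine ⟨gyr a h (add (neg h) k), hH.gyr_mem _ _ (hH.add_mem (hH.neg_mem hh) hk), ?_⟩
    simp only [← gyrassoc a h, Gyrogroup.add_neg_cancel_left]

theorem IsStronglyLSubgyrogroup.qmap_add (hH : IsStronglyLSubgyrogroup H) (a : G) {h : G}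
    (hh : h ∈ H) : qmap H (add a h) = qmap H a :=
  Quotient.sound (hH.lCoset_add a hh)

theorem exists_add_eq_of_qmap_eq (h0 : (zero : G) ∈ H) {x y : G}
    (e : qmap H x = qmap H y) : ∃ h ∈ H, add y h = x := by
  have hx : x ∈ lCoset H x := ⟨zero, h0, Gyrogroup.add_zero x⟩
  have hcoset : lCoset H x = lCoset H y := Quotient.exact e
  rwa [hcoset] at hx

variable [TopologicalSpace G] [TopologicalGyrogroup G]

theorem Continuous.gyrogroup_add {X : Type*} [TopologicalSpace X] {f g : X → G}
    (hf : Continuous f) (hg : Continuous g) : Continuous fun x => Gyrogroup.add (f x) (g x) :=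
  TopologicalGyrogroup.continuous_add.comp (hf.prodMk hg)

def Gyrogroup.addLeftHomeomorph (a : G) : G ≃ₜ G where
  toFun := add a
  invFun := add (neg a)
  left_inv := Gyrogroup.neg_add_cancel_left a
  right_inv := Gyrogroup.add_neg_cancel_left a
  continuous_toFun := continuous_const.gyrogroup_add continuous_id
  continuous_invFun := continuous_const.gyrogroup_add continuous_id

theorem TopologicalGyrogroup.firstCountableTopology_of_nhds_zero
    [(𝓝 (zero : G)).IsCountablyGenerated] : FirstCountableTopology G := by
  refine ⟨fun a => ?_⟩
  have := (addLeftHomeomorph a).map_nhds_eq zero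
  rw [show addLeftHomeomorph a zero = a from Gyrogroup.add_zero a] at this
  rw [← this]
  infer_instance

theorem IsStronglyLSubgyrogroup.isOpenMap_qmap (hH : IsStronglyLSubgyrogroup H) :
    IsOpenMap (qmap H) := by
  intro U hU
  have saturation : qmap H ⁻¹' (qmap H '' U) = ⋃ h ∈ H, (fun x => add x h) ⁻¹' U := by
    ext x
    simp only [mem_preimage, mem_image, mem_iUnion, exists_prop]
    constructor
    · rintro ⟨u, hu, e⟩
      obtain ⟨h, hh, rfl⟩ := exists_add_eq_of_qmap_eq hH.zero_mem e
      exact ⟨h, hh, hu⟩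
    · rintro ⟨h, hh, hxh⟩
      exact ⟨_, hxh, hH.qmap_add x hh⟩
  rw [← isQuotientMap_quotient_mk'.isOpen_preimage]
  change IsOpen (qmap H ⁻¹' (qmap H '' U))
  rw [saturation]
  exact isOpen_biUnion fun h _ => hU.preimage (continuous_id.gyrogroup_add continuous_const)

theorem IsStronglyLSubgyrogroup.nhds_zero_eq_comap_qmap_inf (hH : IsStronglyLSubgyrogroup H)
    {𝓐 : Filter G} (h𝓐 : 𝓝 zero ≤ 𝓐)
    (hsmall : ∀ V ∈ 𝓝 (zero : G), ∃ A ∈ 𝓐,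
      ∀ q ∈ A, ∀ x ∈ A, add (neg q) x ∈ H → add (neg q) x ∈ V) :
    𝓝 zero = comap (qmap H) (𝓝 (qmap H zero)) ⊓ 𝓐 := by
  refine le_antisymm (le_inf continuous_quot_mk.continuousAt.le_comap h𝓐) fun t ht => ?_
  have hadd : (fun p : G × G => add p.1 p.2) ⁻¹' t ∈ 𝓝 zero ×ˢ 𝓝 zero := by
    rw [← nhds_prod_eq]
    exact TopologicalGyrogroup.continuous_add.continuousAt.preimage_mem_nhds
      (by rwa [Gyrogroup.zero_add])
  obtain ⟨V, hV, hVVt⟩ := mem_prod_self_iff.mp hadd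
  obtain ⟨A, hA, hAV⟩ := hsmall V hV
  have hπ : qmap H '' (V ∩ A) ∈ 𝓝 (qmap H zero) :=
    hH.isOpenMap_qmap.image_mem_nhds (inter_mem hV (h𝓐 hA))
  filter_upwards [mem_inf_of_left (preimage_mem_comap hπ), mem_inf_of_right hA]
    with x ⟨q, ⟨hqV, hqA⟩, hqx⟩ hxA
  obtain ⟨h, hh, rfl⟩ := exists_add_eq_of_qmap_eq hH.zero_mem hqx.symm
  have hhV : h ∈ V := by
    have := hAV q hqA _ hxA
    rw [Gyrogroup.neg_add_cancel_left] at this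
    exact this hh
  exact hVVt (mk_mem_prod hqV hhV)

theorem exists_isCountablyGenerated_nhds_zero_le (H : Set G)
    [(𝓝[H] (zero : G)).IsCountablyGenerated] :
    ∃ 𝓐 : Filter G, 𝓐.IsCountablyGenerated ∧ 𝓝 zero ≤ 𝓐 ∧
      ∀ V ∈ 𝓝 (zero : G), ∃ A ∈ 𝓐,
        ∀ q ∈ A, ∀ x ∈ A, add (neg q) x ∈ H → add (neg q) x ∈ V := by
  obtain ⟨s, -, hs⟩ := (𝓝[H] (zero : G)).exists_antitone_seq
  have hdiff : Continuous fun p : G × G => add (neg p.1) p.2 :=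
    (TopologicalGyrogroup.continuous_neg.comp continuous_fst).gyrogroup_add continuous_snd
  have hW : ∀ k, ∃ W ∈ 𝓝 (zero : G),
      ∀ q ∈ W, ∀ x ∈ W, add (neg q) x ∈ H → add (neg q) x ∈ s k := by
    intro k
    have hsk : {y | y ∈ H → y ∈ s k} ∈ 𝓝 (zero : G) :=
      mem_nhdsWithin_iff_eventually.mp (hs.mpr ⟨k, subset_rfl⟩)
    have := hdiff.continuousAt (x := (zero, zero)).preimage_mem_nhds
      (by rwa [Gyrogroup.neg_add])
    rw [nhds_prod_eq] at this
    obtain ⟨W, hW, hWs⟩ := mem_prod_self_iff.mp this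
    exact ⟨W, hW, fun q hq x hx => hWs (mk_mem_prod hq hx)⟩
  choose W hW0 hWs using hW
  refine ⟨⨅ k, 𝓟 (W k), isCountablyGenerated_seq W,
    le_iInf fun k => le_principal_iff.mpr (hW0 k), fun V hV => ?_⟩
  obtain ⟨k, hk⟩ := hs.mp (mem_nhdsWithin_of_mem_nhds hV)
  exact ⟨W k, mem_iInf_of_mem k (mem_principal_self _),
    fun q hq x hx hqx => hk (hWs k q hq x hx hqx)⟩

end

theorem stmt_13_general {G : Type u} [Gyrogroup G] [TopologicalSpace G] [TopologicalGyrogroup G]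
    (H : Set G) (hH : IsStronglyLSubgyrogroup H)
    (h1 : FirstCountableTopology H)
    (h2 : FirstCountableTopology (GyroQuot H)) :
    FirstCountableTopology G := by
  have : (𝓝[H] (zero : G)).IsCountablyGenerated := by
    rw [← map_nhds_subtype_val ⟨zero, hH.zero_mem⟩]
    infer_instance
  obtain ⟨𝓐, h𝓐, hle, hsmall⟩ := exists_isCountablyGenerated_nhds_zero_le H
  have : (𝓝 (zero : G)).IsCountablyGenerated := by
    rw [hH.nhds_zero_eq_comap_qmap_inf hle hsmall]
    infer_instance
  exact TopologicalGyrogroup.firstCountableTopology_of_nhds_zero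

/-- If `H` is a closed strongly L-subgyrogroup and both `H` and `G/H`
are first-countable, then `G` is first-countable. -/
theorem stmt_13 {G : Type u} [Gyrogroup G] [TopologicalSpace G] [TopologicalGyrogroup G]
    (H : Set G) (hH : IsStronglyLSubgyrogroup H) (hcl : IsClosed H)
    (h1 : FirstCountableTopology H)
    (h2 : FirstCountableTopology (GyroQuot H)) :
    FirstCountableTopology G :=
  stmt_13_general H hH h1 h2
end
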